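/- arXiv:1905.01811 — 3 statements merged into one kernel-verified Lean document; each statement's English description precedes it below -/
import Mathlib

section
/- Let P ⊂ ℝ^m be a set, let 𝒜 : ℝ^m → Matrix (Fin n) (Fin n) ℝ be continuous, let M : ℝ^m → Matrix (Fin n) (Fin n) ℝ be continuously differentiable with M(σ) symmetric and a₁·I ⪯ M(σ) ⪯ a₂·I for all σ ∈ P, where 0 < a₁ ≤ a₂, and let λ > 0. Suppose that for all σ ∈ P and all ρ ∈ ℝ^m with |ρᵢ| ≤ p̄ᵢ for each i, the matrix M(σ)𝒜(σ) + 𝒜(σ)ᵀM(σ) + 2λM(σ) + Σᵢ ρᵢ·(∂M/∂σᵢ)(σ) is negative semidefinite. Then for every continuously differentiable scheduling signal σ : [0,∞) → ℝ^m with σ(t) ∈ P and |σ̇ᵢ(t)| ≤ p̄ᵢ for all t and i, and every solution x : [0,∞) → ℝ^n of ẋ(t) = 𝒜(σ(t))x(t), one has |x(t)| ≤ √(a₂/a₁)·e^{−λt}·|x(0)| for all t ≥ 0. -/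
/-!
Along a solution, `V(t) = x(t)ᵀ M(σ(t)) x(t)` has derivative
`x(t)ᵀ (M𝒜 + 𝒜ᵀM + ∑ᵢ σ̇ᵢ(t) ∂M/∂σᵢ) x(t)`, evaluated at `σ(t)`. The rate `σ̇(t)` is admissible,
so the LMI with `ρ = σ̇(t)` bounds this derivative by `-2λ V(t)`, and Grönwall's inequality gives
`V(t) ≤ e^{-2λt} V(0)`. Squeezing with `a₁ |x|² ≤ V ≤ a₂ |x|²` and taking square roots yields the
estimate.
-/

open Matrix Set

/-- Partial derivative of a matrix-valued function `M` with respect to the `i`-th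
coordinate of its argument, taken entrywise. -/
noncomputable def matPartial {m n : ℕ} (M : (Fin m → ℝ) → Matrix (Fin n) (Fin n) ℝ)
    (i : Fin m) (σ : Fin m → ℝ) : Matrix (Fin n) (Fin n) ℝ :=
  Matrix.of fun j k => fderiv ℝ (fun σ' => M σ' j k) σ (Pi.single i 1)

section QuadraticForm

variable {ι : Type*} [Fintype ι]

theorem HasDerivWithinAt.dotProduct_mulVec {x : ℝ → ι → ℝ} {x' : ι → ℝ}
    {Q : ℝ → Matrix ι ι ℝ} {Q' : Matrix ι ι ℝ} {s : Set ℝ} {τ : ℝ}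
    (hx : HasDerivWithinAt x x' s τ)
    (hQ : ∀ j k, HasDerivWithinAt (fun τ => Q τ j k) (Q' j k) s τ) :
    HasDerivWithinAt (fun τ => x τ ⬝ᵥ (Q τ *ᵥ x τ))
      (x' ⬝ᵥ (Q τ *ᵥ x τ) + x τ ⬝ᵥ (Q' *ᵥ x τ) + x τ ⬝ᵥ (Q τ *ᵥ x')) s τ := by
  have hxj (j : ι) : HasDerivWithinAt (fun τ => x τ j) (x' j) s τ := hasDerivWithinAt_pi.1 hx j
  simp only [dotProduct, mulVec, Finset.mul_sum, ← Finset.sum_add_distrib]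
  refine HasDerivWithinAt.fun_sum fun j _ => HasDerivWithinAt.fun_sum fun k _ => ?_
  exact ((hxj j).fun_mul ((hQ j k).fun_mul (hxj k))).congr_deriv (by ring)

theorem hasDerivWithinAt_dotProduct_mulVec_of_linear {x : ℝ → ι → ℝ} {A : Matrix ι ι ℝ}
    {Q : ℝ → Matrix ι ι ℝ} {Q' : Matrix ι ι ℝ} {s : Set ℝ} {τ : ℝ}
    (hx : HasDerivWithinAt x (A *ᵥ x τ) s τ)
    (hQ : ∀ j k, HasDerivWithinAt (fun τ => Q τ j k) (Q' j k) s τ) :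
    HasDerivWithinAt (fun τ => x τ ⬝ᵥ (Q τ *ᵥ x τ))
      (x τ ⬝ᵥ ((Q τ * A + Aᵀ * Q τ + Q') *ᵥ x τ)) s τ := by
  convert hx.dotProduct_mulVec hQ using 1
  rw [add_mulVec, add_mulVec, ← mulVec_mulVec, ← mulVec_mulVec, dotProduct_add, dotProduct_add,
    dotProduct_mulVec (x τ) Aᵀ, vecMul_transpose, dotProduct_comm (x τ)]
  ring

theorem dotProduct_mulVec_le_of_posSemidef_sub {A B : Matrix ι ι ℝ}
    (h : (B - A).PosSemidef) (x : ι → ℝ) : x ⬝ᵥ (A *ᵥ x) ≤ x ⬝ᵥ (B *ᵥ x) := by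
  have := h.dotProduct_mulVec_nonneg x
  rw [star_trivial, sub_mulVec, dotProduct_sub] at this
  linarith

theorem dotProduct_mulVec_add_le_of_posSemidef_neg {X Q Y : Matrix ι ι ℝ} {c : ℝ}
    (h : (-(X + c • Q + Y)).PosSemidef) (x : ι → ℝ) :
    x ⬝ᵥ ((X + Y) *ᵥ x) ≤ -c * (x ⬝ᵥ (Q *ᵥ x)) := by
  have := dotProduct_mulVec_le_of_posSemidef_sub (A := X + Y) (B := -(c • Q))
    (by convert h using 1; abel) x
  simpa only [neg_mulVec, smul_mulVec, dotProduct_neg, dotProduct_smul, smul_eq_mul,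
    neg_mul] using this

end QuadraticForm

theorem hasDerivWithinAt_matrix_comp {m n : ℕ} {M : (Fin m → ℝ) → Matrix (Fin n) (Fin n) ℝ}
    {γ : ℝ → Fin m → ℝ} {γ' : Fin m → ℝ} {s : Set ℝ} {τ : ℝ}
    (hM : ∀ j k, DifferentiableAt ℝ (fun σ => M σ j k) (γ τ))
    (hγ : HasDerivWithinAt γ γ' s τ) (j k : Fin n) :
    HasDerivWithinAt (fun τ => M (γ τ) j k) ((∑ i, γ' i • matPartial M i (γ τ)) j k) s τ := by
  refine ((hM j k).hasFDerivAt.comp_hasDerivWithinAt τ hγ).congr_deriv ?_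
  conv_lhs => rw [pi_eq_sum_univ' γ', map_sum]
  simp [matPartial, Matrix.sum_apply]

theorem le_mul_exp_of_hasDerivWithinAt_le {f f' : ℝ → ℝ} {c a : ℝ}
    (hf : ∀ τ ∈ Ici a, HasDerivWithinAt f (f' τ) (Ici a) τ)
    (hbound : ∀ τ ∈ Ici a, f' τ ≤ c * f τ) {t : ℝ} (ht : a ≤ t) :
    f t ≤ f a * Real.exp (c * (t - a)) := by
  have hright {τ} (hτ : τ ∈ Ici a) : HasDerivWithinAt f (f' τ) (Ici τ) τ :=
    (hf τ hτ).mono (Ici_subset_Ici.2 hτ)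
  have := le_gronwallBound_of_liminf_deriv_right_le (K := c) (ε := 0)
    (fun τ hτ => (hf τ hτ.1).continuousWithinAt.mono Icc_subset_Ici_self)
    (fun τ hτ _ hr => (hright hτ.1).liminf_right_slope_le hr) le_rfl
    (fun τ hτ => (add_zero (c * f τ)).symm ▸ hbound τ hτ.1) t ⟨ht, le_rfl⟩
  rwa [gronwallBound_ε0] at this

theorem sqrt_le_sqrt_div_mul_mul_sqrt {a₁ a₂ e q q₀ : ℝ} (ha₁ : 0 < a₁) (he : 0 ≤ e)
    (hq₀ : 0 ≤ q₀) (h : a₁ * q ≤ a₂ * e ^ 2 * q₀) :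
    √q ≤ √(a₂ / a₁) * e * √q₀ := by
  have hq : q ≤ a₂ / a₁ * e ^ 2 * q₀ := by
    rw [div_mul_eq_mul_div, div_mul_eq_mul_div, le_div_iff₀ ha₁]
    linarith
  calc √q ≤ √(a₂ / a₁ * e ^ 2 * q₀) := Real.sqrt_le_sqrt hq
    _ = √(a₂ / a₁) * e * √q₀ := by
      rw [Real.sqrt_mul' _ hq₀, Real.sqrt_mul' _ (sq_nonneg e), Real.sqrt_sq he]

theorem lpv_exponential_stability_general (n m : ℕ)
    (P : Set (Fin m → ℝ))
    (𝒜 : (Fin m → ℝ) → Matrix (Fin n) (Fin n) ℝ)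
    (M : (Fin m → ℝ) → Matrix (Fin n) (Fin n) ℝ)
    (hMC1 : ∀ j k, ContDiff ℝ 1 fun σ => M σ j k)
    (a₁ a₂ lam : ℝ) (ha₁ : 0 < a₁)
    (pbar : Fin m → ℝ)
    (hMlow : ∀ σ ∈ P, (M σ - a₁ • (1 : Matrix (Fin n) (Fin n) ℝ)).PosSemidef)
    (hMhigh : ∀ σ ∈ P, (a₂ • (1 : Matrix (Fin n) (Fin n) ℝ) - M σ).PosSemidef)
    (hLMI : ∀ σ ∈ P, ∀ ρ : Fin m → ℝ, (∀ i, |ρ i| ≤ pbar i) →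
      (-(M σ * 𝒜 σ + (𝒜 σ)ᵀ * M σ + (2 * lam) • M σ +
          ∑ i, ρ i • matPartial M i σ)).PosSemidef) :
    ∀ σs : ℝ → (Fin m → ℝ),
      ContDiffOn ℝ 1 σs (Ici 0) →
      (∀ t ∈ Ici (0 : ℝ), σs t ∈ P) →
      (∀ t ∈ Ici (0 : ℝ), ∀ i, |derivWithin (fun τ => σs τ i) (Ici 0) t| ≤ pbar i) →
      ∀ x : ℝ → (Fin n → ℝ),
        (∀ t ∈ Ici (0 : ℝ), HasDerivWithinAt x (𝒜 (σs t) *ᵥ x t) (Ici 0) t) →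
        ∀ t ∈ Ici (0 : ℝ),
          Real.sqrt (x t ⬝ᵥ x t) ≤
            Real.sqrt (a₂ / a₁) * Real.exp (-lam * t) * Real.sqrt (x 0 ⬝ᵥ x 0) := by
  intro σs hσ hσP hrate x hx t ht
  set ρ : ℝ → Fin m → ℝ := fun τ i => derivWithin (fun τ => σs τ i) (Ici 0) τ
  have hσ' (τ) (hτ : τ ∈ Ici (0 : ℝ)) : HasDerivWithinAt σs (ρ τ) (Ici 0) τ :=
    hasDerivWithinAt_pi.2 fun i =>
      (differentiableWithinAt_pi.1 (hσ.differentiableOn one_ne_zero τ hτ) i).hasDerivWithinAt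
  set V : ℝ → ℝ := fun τ => x τ ⬝ᵥ (M (σs τ) *ᵥ x τ)
  have hV (τ) (hτ : τ ∈ Ici (0 : ℝ)) : HasDerivWithinAt V (x τ ⬝ᵥ
      ((M (σs τ) * 𝒜 (σs τ) + (𝒜 (σs τ))ᵀ * M (σs τ) + ∑ i, ρ τ i • matPartial M i (σs τ)) *ᵥ
        x τ)) (Ici 0) τ :=
    hasDerivWithinAt_dotProduct_mulVec_of_linear (hx τ hτ)
      (hasDerivWithinAt_matrix_comp (fun j k => (hMC1 j k).differentiable one_ne_zero _) (hσ' τ hτ))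
  have hdecay : V t ≤ V 0 * Real.exp (-(2 * lam) * t) := by
    simpa using le_mul_exp_of_hasDerivWithinAt_le hV (fun τ hτ =>
      dotProduct_mulVec_add_le_of_posSemidef_neg
        (hLMI (σs τ) (hσP τ hτ) (ρ τ) (hrate τ hτ)) (x τ)) ht
  have hlow := dotProduct_mulVec_le_of_posSemidef_sub (hMlow (σs t) (hσP t ht)) (x t)
  have hhigh := dotProduct_mulVec_le_of_posSemidef_sub (hMhigh (σs 0) (hσP 0 self_mem_Ici)) (x 0)
  simp only [smul_mulVec, one_mulVec, dotProduct_smul, smul_eq_mul] at hlow hhigh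
  refine sqrt_le_sqrt_div_mul_mul_sqrt ha₁ (Real.exp_pos _).le (dotProduct_self_star_nonneg _) ?_
  calc a₁ * (x t ⬝ᵥ x t) ≤ V 0 * Real.exp (-(2 * lam) * t) := hlow.trans hdecay
    _ ≤ a₂ * (x 0 ⬝ᵥ x 0) * Real.exp (-(2 * lam) * t) := by gcongr
    _ = a₂ * Real.exp (-lam * t) ^ 2 * (x 0 ⬝ᵥ x 0) := by
      rw [sq, ← Real.exp_add]; ring_nf

/-- **Theorem 1 (LPV stability).** If a continuously differentiable parameter-dependent
Lyapunov matrix `M(σ)`, symmetric and uniformly bounded by `a₁ I ⪯ M(σ) ⪯ a₂ I` on `P`,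
satisfies the parameter-dependent LMI
`M(σ)𝒜(σ) + 𝒜(σ)ᵀM(σ) + 2λM(σ) + ∑ᵢ ρᵢ ∂M/∂σᵢ(σ) ⪯ 0`
for all `σ ∈ P` and all rates `|ρᵢ| ≤ p̄ᵢ`, then every solution of `ẋ = 𝒜(σ(t))x`
along an admissible scheduling signal decays as
`|x(t)| ≤ √(a₂/a₁) e^{-λt} |x(0)|`. -/
theorem lpv_exponential_stability (n m : ℕ)
    (P : Set (Fin m → ℝ))
    (𝒜 : (Fin m → ℝ) → Matrix (Fin n) (Fin n) ℝ)
    (h𝒜 : Continuous 𝒜)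
    (M : (Fin m → ℝ) → Matrix (Fin n) (Fin n) ℝ)
    (hMC1 : ∀ j k, ContDiff ℝ 1 fun σ => M σ j k)
    (a₁ a₂ lam : ℝ) (ha₁ : 0 < a₁) (ha₁₂ : a₁ ≤ a₂) (hlam : 0 < lam)
    (pbar : Fin m → ℝ)
    (hMsym : ∀ σ ∈ P, (M σ).IsSymm)
    (hMlow : ∀ σ ∈ P, (M σ - a₁ • (1 : Matrix (Fin n) (Fin n) ℝ)).PosSemidef)
    (hMhigh : ∀ σ ∈ P, (a₂ • (1 : Matrix (Fin n) (Fin n) ℝ) - M σ).PosSemidef)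
    (hLMI : ∀ σ ∈ P, ∀ ρ : Fin m → ℝ, (∀ i, |ρ i| ≤ pbar i) →
      (-(M σ * 𝒜 σ + (𝒜 σ)ᵀ * M σ + (2 * lam) • M σ +
          ∑ i, ρ i • matPartial M i σ)).PosSemidef) :
    ∀ σs : ℝ → (Fin m → ℝ),
      ContDiffOn ℝ 1 σs (Ici 0) →
      (∀ t ∈ Ici (0 : ℝ), σs t ∈ P) →
      (∀ t ∈ Ici (0 : ℝ), ∀ i, |derivWithin (fun τ => σs τ i) (Ici 0) t| ≤ pbar i) →
      ∀ x : ℝ → (Fin n → ℝ),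
        (∀ t ∈ Ici (0 : ℝ), HasDerivWithinAt x (𝒜 (σs t) *ᵥ x t) (Ici 0) t) →
        ∀ t ∈ Ici (0 : ℝ),
          Real.sqrt (x t ⬝ᵥ x t) ≤
            Real.sqrt (a₂ / a₁) * Real.exp (-lam * t) * Real.sqrt (x 0 ⬝ᵥ x 0) :=
  lpv_exponential_stability_general n m P 𝒜 M hMC1 a₁ a₂ lam ha₁ pbar hMlow hMhigh hLMI
end

section
/- Let g : ℝ^n → ℝ^m, u_e : ℝ^m → ℝ^p, x_e : ℝ^m → ℝ^n, and K : ℝ^m → Matrix (Fin p) (Fin n) ℝ all be continuously differentiable, and suppose g(x_e(σ)) = σ for all σ ∈ ℝ^m. Define the gain-scheduled control law κ : ℝ^n → ℝ^p by κ(x) = u_e(g(x)) + K(g(x))·(x − x_e(g(x))). Then for every σ ∈ ℝ^m, the Fréchet derivative of κ at the equilibrium point x_e(σ) is Dκ(x_e(σ)) = K(σ) + (Du_e(σ) − K(σ)·Dx_e(σ)) ∘ Dg(x_e(σ)), where Du_e(σ) : ℝ^m → ℝ^p, Dx_e(σ) : ℝ^m → ℝ^n, and Dg(x_e(σ)) :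 ℝ^n → ℝ^m are the respective derivatives. In particular, in general Dκ(x_e(σ)) ≠ K(σ): the realization introduces the additional term (Du_e(σ) − K(σ)Dx_e(σ))Dg(x_e(σ)). -/
/-!
Write `κ x = u_e(g x) + C(g x) (x - x_e(g x))` with `C σ` the linear map of `K σ`. The product rule
for the bilinear application `(C, w) ↦ C w` gives `D(C ∘ g)(x₀)` applied to the deviation
`x₀ - x_e(g x₀)`, which vanishes on the equilibrium family, plus `C(g x₀)` composed with the
derivative `id - Dx_e ∘ Dg` of the deviation. So the variation of the gain drops out, but the
variation of the equilibrium through the scheduling map does not: together with `Du_e ∘ Dg` it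
forms the hidden coupling term.
-/

open Matrix

section

variable {𝕜 : Type*} [NontriviallyNormedField 𝕜]
  {E F G S : Type*} [NormedAddCommGroup E] [NormedSpace 𝕜 E] [NormedAddCommGroup F]
  [NormedSpace 𝕜 F] [NormedAddCommGroup G] [NormedSpace 𝕜 G] [NormedAddCommGroup S]
  [NormedSpace 𝕜 S]

theorem HasFDerivAt.clm_apply_of_eq_zero {c : E → F →L[𝕜] G} {u : E → F} {u' : E →L[𝕜] F}
    {x : E} (hc : DifferentiableAt 𝕜 c x) (hu : HasFDerivAt u u' x) (hux : u x = 0) :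
    HasFDerivAt (fun y => c y (u y)) ((c x).comp u') x := by
  simpa [hux] using hc.hasFDerivAt.clm_apply hu

theorem hasFDerivAt_scheduled_feedback {g : E → S} {ue : S → G} {xe : S → E}
    {C : S → E →L[𝕜] G} {g' : E →L[𝕜] S} {ue' : S →L[𝕜] G} {xe' : S →L[𝕜] E} {σ : S}
    (hg : HasFDerivAt g g' (xe σ)) (hue : HasFDerivAt ue ue' σ) (hxe : HasFDerivAt xe xe' σ)
    (hC : DifferentiableAt 𝕜 C σ) (hgxe : g (xe σ) = σ) :
    HasFDerivAt (fun x => ue (g x) + C (g x) (x - xe (g x)))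
      (C σ + (ue' - (C σ).comp xe').comp g') (xe σ) := by
  rw [← hgxe] at hue hxe hC
  have hdev : HasFDerivAt (fun x => x - xe (g x)) (.id 𝕜 E - xe'.comp g') (xe σ) :=
    (hasFDerivAt_id _).sub (hxe.comp _ hg)
  have hdev_zero : xe σ - xe (g (xe σ)) = 0 := by rw [hgxe, sub_self]
  refine ((hue.comp _ hg).add <| HasFDerivAt.clm_apply_of_eq_zero
    (hC.comp (xe σ) hg.differentiableAt) hdev hdev_zero).congr_fderiv ?_
  rw [Function.comp_apply, hgxe, ContinuousLinearMap.comp_sub, ContinuousLinearMap.comp_id,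
    ContinuousLinearMap.sub_comp, ContinuousLinearMap.comp_assoc]
  abel

end

theorem Matrix.contDiff_toContinuousLinearMap_mulVecLin {𝕜 : Type*} [NontriviallyNormedField 𝕜]
    [CompleteSpace 𝕜] {D : Type*} [NormedAddCommGroup D] [NormedSpace 𝕜 D]
    {ι κ : Type*} [Fintype ι] [Fintype κ] {k : WithTop ℕ∞} {M : D → Matrix ι κ 𝕜}
    (hM : ∀ i j, ContDiff 𝕜 k fun x => M x i j) :
    ContDiff 𝕜 k fun x => LinearMap.toContinuousLinearMap (mulVecLin (M x)) := by
  refine contDiff_clm_apply_iff.mpr fun v => contDiff_pi.mpr fun i => ?_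
  exact ContDiff.sum fun j _ => (hM i j).mul contDiff_const

/-- **Hidden coupling terms in the gain-scheduled realization.** For the gain-scheduled
control law `κ(x) = u_e(g(x)) + K(g(x))(x - x_e(g(x)))` built from a `C¹` equilibrium
family with `g(x_e(σ)) = σ`, the Fréchet derivative at the equilibrium point `x_e(σ)` is
`Dκ(x_e(σ)) = K(σ) + (Du_e(σ) - K(σ)∘Dx_e(σ)) ∘ Dg(x_e(σ))`: the realization introduces
the hidden coupling term `(Du_e(σ) - K(σ)Dx_e(σ))Dg(x_e(σ))` beyond `K(σ)`. -/
theorem gain_scheduled_hidden_coupling {n m p : ℕ}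
    (g : (Fin n → ℝ) → (Fin m → ℝ))
    (ue : (Fin m → ℝ) → (Fin p → ℝ))
    (xe : (Fin m → ℝ) → (Fin n → ℝ))
    (K : (Fin m → ℝ) → Matrix (Fin p) (Fin n) ℝ)
    (hg : ContDiff ℝ 1 g) (hue : ContDiff ℝ 1 ue) (hxe : ContDiff ℝ 1 xe)
    (hK : ∀ i j, ContDiff ℝ 1 fun σ => K σ i j)
    (hgxe : ∀ σ, g (xe σ) = σ)
    (σ : Fin m → ℝ) :
    fderiv ℝ (fun x => ue (g x) + K (g x) *ᵥ (x - xe (g x))) (xe σ) =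
      LinearMap.toContinuousLinearMap (Matrix.mulVecLin (K σ)) +
        ((fderiv ℝ ue σ) -
            (LinearMap.toContinuousLinearMap (Matrix.mulVecLin (K σ))).comp
              (fderiv ℝ xe σ)).comp
          (fderiv ℝ g (xe σ)) := by
  have hC := (contDiff_toContinuousLinearMap_mulVecLin hK).differentiable one_ne_zero σ
  exact (hasFDerivAt_scheduled_feedback (hg.differentiable one_ne_zero _).hasFDerivAt
    (hue.differentiable one_ne_zero σ).hasFDerivAt (hxe.differentiable one_ne_zero σ).hasFDerivAt
    hC (hgxe σ)).fderiv
end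

section
/- Let c ∈ ℝ, c ≠ 0, let w(t) = w₀ + c·t for some w₀ ∈ ℝ, and let (x₁, x₂) : [0,∞) → ℝ² solve the closed-loop system ẋ₁ = −x₁ − x₂ + w(t), ẋ₂ = x₁ (the plant ẋ₁ = −x₁ − x₂ + w, ẋ₂ = 1 − e^{−x₂} + u under the controller u = x₁ + e^{−x₂} − 1). Then the tracking error e(t) = (x₁(t), x₂(t) − w(t)) satisfies ė(t) = [[−1,−1],[1,0]]·e(t) − (0, c), and e(t) converges to (c, −c) as t → ∞; in particular the tracking error does not converge to zero. -/
/-!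
With `y = (x₁ - c, x₂ - w + c)` the closed loop becomes the homogeneous system
`ẏ₁ = -y₁ - y₂`, `ẏ₂ = y₁`, whose matrix `[[-1,-1],[1,0]]` is Hurwitz. The quadratic form
`V = 2y₁² + 2y₁y₂ + 3y₂²` is a strict Lyapunov function for it, `V̇ = -2(y₁² + y₂²) ≤ -V/2`,
so by Grönwall `V` decays exponentially and `y → 0`, i.e. the error tends to `(c, -c) ≠ 0`.
-/

open Set Filter Topology

theorem le_mul_exp_of_hasDerivWithinAt_le_neg_mul {V V' : ℝ → ℝ} {a k : ℝ}
    (hV : ∀ t ∈ Ici a, HasDerivWithinAt V (V' t) (Ici a) t)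
    (hV' : ∀ t ∈ Ici a, V' t ≤ -k * V t) {t : ℝ} (ht : a ≤ t) :
    V t ≤ V a * Real.exp (-k * (t - a)) := by
  have hcont : ContinuousOn V (Icc a t) := fun s hs =>
    (hV s hs.1).continuousWithinAt.mono Icc_subset_Ici_self
  have := le_gronwallBound_of_liminf_deriv_right_le hcont
    (fun s hs _ hr => ((hV s hs.1).mono (Ici_subset_Ici.2 hs.1)).liminf_right_slope_le hr)
    le_rfl (K := -k) (ε := 0) (fun s hs => by simpa using hV' s hs.1) t ⟨ht, le_rfl⟩
  rwa [gronwallBound_ε0] at this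

namespace HurwitzSystem

variable {y₁ y₂ : ℝ → ℝ}
  (hy₁ : ∀ t ∈ Ici (0 : ℝ), HasDerivWithinAt y₁ (-y₁ t - y₂ t) (Ici 0) t)
  (hy₂ : ∀ t ∈ Ici (0 : ℝ), HasDerivWithinAt y₂ (y₁ t) (Ici 0) t)

include hy₁ hy₂ in
theorem hasDerivWithinAt_lyapunov : ∀ t ∈ Ici (0 : ℝ),
    HasDerivWithinAt (fun s => 2 * y₁ s ^ 2 + 2 * y₁ s * y₂ s + 3 * y₂ s ^ 2)
      (-2 * y₁ t ^ 2 - 2 * y₂ t ^ 2) (Ici 0) t := fun t ht =>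
  ((((hy₁ t ht).fun_pow 2).const_mul 2).fun_add (((hy₁ t ht).const_mul 2).fun_mul (hy₂ t ht))
    |>.fun_add (((hy₂ t ht).fun_pow 2).const_mul 3)).congr_deriv (by push_cast; ring)

include hy₁ hy₂ in
theorem tendsto_nhds_zero :
    Tendsto (fun t => (y₁ t, y₂ t)) atTop (𝓝 0) := by
  set V := fun s => 2 * y₁ s ^ 2 + 2 * y₁ s * y₂ s + 3 * y₂ s ^ 2
  have hsq : ∀ t, y₁ t ^ 2 ≤ V t ∧ y₂ t ^ 2 ≤ V t := fun t =>
    ⟨by nlinarith [sq_nonneg (y₁ t + 2 * y₂ t)], by nlinarith [sq_nonneg (y₁ t + y₂ t)]⟩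
  have hV_decay : ∀ t ≥ 0, V t ≤ V 0 * Real.exp (-(1 / 2) * t) := fun t ht => by
    simpa only [sub_zero] using le_mul_exp_of_hasDerivWithinAt_le_neg_mul
      (hasDerivWithinAt_lyapunov hy₁ hy₂) (k := 1 / 2)
      (fun s _ => by nlinarith [sq_nonneg (2 * y₁ s - y₂ s), sq_nonneg (y₂ s)]) ht
  have hV : Tendsto V atTop (𝓝 0) := by
    have hexp : Tendsto (fun t => V 0 * Real.exp (-(1 / 2) * t)) atTop (𝓝 0) := by
      simpa using (Real.tendsto_exp_atBot.comp
        (tendsto_id.const_mul_atTop_of_neg (by norm_num : -(1 / 2 : ℝ) < 0))).const_mul (V 0)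
    exact tendsto_of_tendsto_of_tendsto_of_le_of_le' tendsto_const_nhds hexp
      (Eventually.of_forall fun t => (sq_nonneg _).trans (hsq t).1)
      (eventually_ge_atTop 0 |>.mono hV_decay)
  have hsqrt : Tendsto (fun t => √(V t)) atTop (𝓝 0) := by
    simpa using hV.sqrt
  exact (squeeze_zero_norm (fun t => Real.abs_le_sqrt (hsq t).1) hsqrt).prodMk_nhds
    (squeeze_zero_norm (fun t => Real.abs_le_sqrt (hsq t).2) hsqrt)

end HurwitzSystem

/-- **GSC 2 has nonzero steady-state error for ramp references.** With `w(t) = w₀ + ct`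
(`c ≠ 0`) and `(x₁, x₂)` solving the closed loop `ẋ₁ = -x₁ - x₂ + w(t)`, `ẋ₂ = x₁`
(the plant under the controller `u = x₁ + e^{-x₂} - 1`), the error
`e = (x₁, x₂ - w)` satisfies `ė = [[-1,-1],[1,0]]e - (0,c)` and converges to `(c, -c)`;
in particular it does not converge to zero. -/
theorem gsc2_ramp_reference_offset (c w₀ : ℝ) (hc : c ≠ 0) (x₁ x₂ : ℝ → ℝ)
    (hx₁ : ∀ t ∈ Ici (0 : ℝ),
      HasDerivWithinAt x₁ (-(x₁ t) - x₂ t + (w₀ + c * t)) (Ici 0) t)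
    (hx₂ : ∀ t ∈ Ici (0 : ℝ), HasDerivWithinAt x₂ (x₁ t) (Ici 0) t) :
    (∀ t ∈ Ici (0 : ℝ),
      HasDerivWithinAt x₁ (-(x₁ t) - (x₂ t - (w₀ + c * t))) (Ici 0) t ∧
      HasDerivWithinAt (fun τ => x₂ τ - (w₀ + c * τ)) (x₁ t - c) (Ici 0) t) ∧
    Tendsto (fun t => (x₁ t, x₂ t - (w₀ + c * t))) atTop (nhds (c, -c)) ∧
    ¬ Tendsto (fun t => (x₁ t, x₂ t - (w₀ + c * t))) atTop (nhds ((0 : ℝ), (0 : ℝ))) := by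
  have hw (t : ℝ) : HasDerivWithinAt (fun τ => w₀ + c * τ) c (Ici 0) t := by
    simpa using ((hasDerivWithinAt_id t _).const_mul c).const_add w₀
  have herr (t : ℝ) (ht : t ∈ Ici (0 : ℝ)) :
      HasDerivWithinAt x₁ (-(x₁ t) - (x₂ t - (w₀ + c * t))) (Ici 0) t ∧
      HasDerivWithinAt (fun τ => x₂ τ - (w₀ + c * τ)) (x₁ t - c) (Ici 0) t :=
    ⟨(hx₁ t ht).congr_deriv (by ring), (hx₂ t ht).sub (hw t)⟩
  have hlim : Tendsto (fun t => (x₁ t, x₂ t - (w₀ + c * t))) atTop (𝓝 (c, -c)) := by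
    have hy := HurwitzSystem.tendsto_nhds_zero
      (y₁ := fun t => x₁ t - c) (y₂ := fun t => x₂ t - (w₀ + c * t) + c)
      (fun t ht => ((herr t ht).1.sub_const c).congr_deriv (by ring))
      (fun t ht => (herr t ht).2.add_const c)
    simpa using hy.add_const (c, -c)
  refine ⟨herr, hlim, fun h0 => hc ?_⟩
  simpa using congrArg Prod.fst (tendsto_nhds_unique hlim h0)
end
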